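/- In the special case d = 1, L = 2: let σ be the logistic squasher, δ > 0, a < b with b − a ≥ 2δ, and n ∈ ℕ. Then there exist weights such that the two-layer network f(x) = σ(c₁·σ(α₁ x + β₁) + c₂·σ(α₂ x + β₂) + c₀) satisfies f(x) ≥ 1 − e^{−n} for all x ∈ [a+δ, b−δ] ∩ [−1,1] and f(x) ≤ e^{−n} for all x ∈ [−1,1] \ [a−δ, b+δ]. One may take α₁ = −(2/δ)log 7, β₁ = −a·α₁, α₂ = (2/δ)log 7, β₂ = −b·α₂, c₁ = c₂ = −4(n+1), c₀ = 4(n+1). -/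

import Mathlib

/-!
Each first-layer neuron is a steep logistic ramp, of slope `log 49 / δ`, at one endpoint of the
interval: it is within `1/49` of `1` on the side of the interval and within `1/49` of `0` beyond
the `δ`-neighbourhood of that endpoint. The output neuron is a soft AND of the two ramps: its
argument, `4(n+1)(s₁ + s₂) - 6(n+1)`, is at least `n` when both ramps are near `1` and at most
`-n` when one of them is near `0`, and `1 - e^{-t} ≤ σ(t) ≤ e^{t}` turns this into error `e^{-n}`.
-/

noncomputable def logistic (x : ℝ) : ℝ := 1 / (1 + Real.exp (-x))

lemma logistic_eq_sigmoid (x : ℝ) : logistic x = Real.sigmoid x := by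
  rw [logistic, Real.sigmoid_def, one_div]

namespace Real

lemma sigmoid_le_exp (x : ℝ) : sigmoid x ≤ exp x := by
  have h := sigmoid_mul_rexp_neg (-x)
  rw [neg_neg] at h
  rw [← h]
  exact mul_le_of_le_one_left (exp_pos x).le (sigmoid_le_one _)

lemma one_sub_exp_neg_le_sigmoid (x : ℝ) : 1 - exp (-x) ≤ sigmoid x := by
  have h := sigmoid_neg x
  linarith [sigmoid_le_exp (-x)]

lemma one_sub_exp_neg_le_sigmoid_of_le {L t : ℝ} (h : L ≤ t) : 1 - exp (-L) ≤ sigmoid t :=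
  (one_sub_exp_neg_le_sigmoid L).trans (sigmoid_le h)

lemma sigmoid_le_exp_neg_of_le {L t : ℝ} (h : t ≤ -L) : sigmoid t ≤ exp (-L) :=
  (sigmoid_le h).trans (sigmoid_le_exp _)

section Ramp

variable {δ L t : ℝ}

lemma one_sub_exp_neg_le_sigmoid_ramp (hδ : 0 < δ) (hL : 0 ≤ L) (ht : δ ≤ t) :
    1 - exp (-L) ≤ sigmoid (L / δ * t) := by
  apply one_sub_exp_neg_le_sigmoid_of_le
  rw [div_mul_eq_mul_div, le_div_iff₀ hδ]
  exact mul_le_mul_of_nonneg_left ht hL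

lemma sigmoid_ramp_le_exp_neg (hδ : 0 < δ) (hL : 0 ≤ L) (ht : t ≤ -δ) :
    sigmoid (L / δ * t) ≤ exp (-L) := by
  apply sigmoid_le_exp_neg_of_le
  rw [div_mul_eq_mul_div, div_le_iff₀ hδ, neg_mul, ← mul_neg]
  exact mul_le_mul_of_nonneg_left ht hL

end Ramp

section SoftAnd

variable {n s₁ s₂ : ℝ}

lemma one_sub_exp_neg_le_sigmoid_softAnd (hn : 0 ≤ n) (h₁ : 1 - 49⁻¹ ≤ s₁)
    (h₂ : 1 - 49⁻¹ ≤ s₂) :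
    1 - exp (-n) ≤ sigmoid (4 * (n + 1) * s₁ + 4 * (n + 1) * s₂ + -(6 * (n + 1))) := by
  apply one_sub_exp_neg_le_sigmoid_of_le
  nlinarith

lemma sigmoid_softAnd_le_exp_neg (hn : 0 ≤ n) (h₁ : s₁ ≤ 1) (h₂ : s₂ ≤ 1)
    (h : s₁ ≤ 49⁻¹ ∨ s₂ ≤ 49⁻¹) :
    sigmoid (4 * (n + 1) * s₁ + 4 * (n + 1) * s₂ + -(6 * (n + 1))) ≤ exp (-n) := by
  apply sigmoid_le_exp_neg_of_le
  rcases h with h | h <;> nlinarith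

end SoftAnd

end Real

open Real

theorem stmt_15_general (δ : ℝ) (hδ : 0 < δ) (a b : ℝ)
    (n : ℕ) :
    ∃ α₁ β₁ α₂ β₂ c₀ c₁ c₂ : ℝ,
      ∀ x ∈ Set.Icc (-1 : ℝ) 1,
        (x ∈ Set.Icc (a + δ) (b - δ) →
          1 - Real.exp (-(n : ℝ)) ≤
            logistic (c₁ * logistic (α₁ * x + β₁) + c₂ * logistic (α₂ * x + β₂) + c₀)) ∧
        (x ∉ Set.Icc (a - δ) (b + δ) →
          logistic (c₁ * logistic (α₁ * x + β₁) + c₂ * logistic (α₂ * x + β₂) + c₀)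
            ≤ Real.exp (-(n : ℝ))) := by
  simp only [logistic_eq_sigmoid]
  set M := log 49 / δ
  have hL : 0 ≤ log 49 := log_nonneg (by norm_num)
  have h49 : exp (-log 49) = 49⁻¹ := by rw [exp_neg, exp_log (by norm_num)]
  refine ⟨M, -(M * a), -M, M * b, -(6 * (n + 1)), 4 * (n + 1), 4 * (n + 1), fun x _ => ?_⟩
  rw [show M * x + -(M * a) = M * (x - a) by ring, show -M * x + M * b = M * (b - x) by ring]
  refine ⟨fun ⟨hax, hxb⟩ => ?_, fun hx => ?_⟩
  · apply one_sub_exp_neg_le_sigmoid_softAnd n.cast_nonneg <;> rw [← h49]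
    · exact one_sub_exp_neg_le_sigmoid_ramp hδ hL (by linarith)
    · exact one_sub_exp_neg_le_sigmoid_ramp hδ hL (by linarith)
  · apply sigmoid_softAnd_le_exp_neg n.cast_nonneg (sigmoid_le_one _) (sigmoid_le_one _)
    rw [← h49]
    rw [Set.mem_Icc, not_and_or, not_le, not_le] at hx
    rcases hx with hx | hx
    · exact .inl (sigmoid_ramp_le_exp_neg hδ hL (by linarith))
    · exact .inr (sigmoid_ramp_le_exp_neg hδ hL (by linarith))

/-- Special case `d = 1`, `L = 2` of Lemma 7: a two-layer logistic network
approximating the indicator of an interval `[a,b]` with error `e⁻ⁿ` outside a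
`δ`-neighbourhood of its endpoints. -/
theorem stmt_15 (δ : ℝ) (hδ : 0 < δ) (a b : ℝ) (hab : a < b) (h2δ : 2 * δ ≤ b - a)
    (n : ℕ) :
    ∃ α₁ β₁ α₂ β₂ c₀ c₁ c₂ : ℝ,
      ∀ x ∈ Set.Icc (-1 : ℝ) 1,
        (x ∈ Set.Icc (a + δ) (b - δ) →
          1 - Real.exp (-(n : ℝ)) ≤
            logistic (c₁ * logistic (α₁ * x + β₁) + c₂ * logistic (α₂ * x + β₂) + c₀)) ∧
        (x ∉ Set.Icc (a - δ) (b + δ) →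
          logistic (c₁ * logistic (α₁ * x + β₁) + c₂ * logistic (α₂ * x + β₂) + c₀)
            ≤ Real.exp (-(n : ℝ))) :=
  stmt_15_general δ hδ a b n
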